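/- arXiv:2306.12356 — 5 statements merged into one kernel-verified Lean document; each statement's English description precedes it below -/
import Mathlib

section
/- Let d be a positive integer and let M and G be real symmetric d×d matrices such that M − I is positive semidefinite (M ⪰ I) and G is positive semidefinite with I − G positive semidefinite (all eigenvalues of G are at most 1). Then trace(G · M⁻¹) ≤ 2·(log det(M + G) − log det(M)). -/
open Matrix
open scoped Matrix

open scoped MatrixOrder ComplexOrder

/-! Whitening by `T = M^{-1/2}` turns `G` into `N = T G T` with `0 ≤ N ≤ 2`, and then
`trace (G M⁻¹) = trace N` and `det (M + G) = det M · det (1 + N)`. In an eigenbasis of `N` the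
claim becomes `x ≤ 2 log (1 + x)` on `[0, 2]`, a consequence of `log (1 + x) ≥ 2x / (x + 2)`. -/

lemma Real.le_two_mul_log_one_add {x : ℝ} (h0 : 0 ≤ x) (h2 : x ≤ 2) :
    x ≤ 2 * Real.log (1 + x) := by
  have key := Real.le_log_one_add_of_nonneg h0
  rw [div_le_iff₀ (by linarith)] at key
  nlinarith [Real.log_nonneg (by linarith : (1 : ℝ) ≤ 1 + x)]

namespace Matrix

variable {n : Type*} [Fintype n] [DecidableEq n]

lemma PosDef.exists_nonneg_mul_mul_eq_one {𝕜 : Type*} [RCLike 𝕜] {M : Matrix n n 𝕜}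
    (hM : M.PosDef) : ∃ T : Matrix n n 𝕜, 0 ≤ T ∧ T * M * T = 1 ∧ T * T = M⁻¹ := by
  set T := CFC.sqrt M⁻¹
  have hMdet : IsUnit M.det := (isUnit_iff_isUnit_det M).mp hM.isUnit
  have hTT : T * T = M⁻¹ := CFC.sqrt_mul_sqrt_self _ hM.inv.posSemidef.nonneg
  have hTdet : IsUnit T.det := by
    have := (isUnit_nonsing_inv_det_iff (A := M)).mpr hMdet
    rw [← hTT, det_mul] at this
    exact isUnit_of_mul_isUnit_left this
  have hM_eq : M = T⁻¹ * T⁻¹ := by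
    rw [← mul_inv_rev, hTT, nonsing_inv_nonsing_inv _ hMdet]
  refine ⟨T, CFC.sqrt_nonneg _, ?_, hTT⟩
  rw [hM_eq, ← mul_assoc, mul_nonsing_inv _ hTdet, one_mul, nonsing_inv_mul _ hTdet]

lemma det_add_eq_det_mul_det_one_add {R : Type*} [CommRing R] {M G T : Matrix n n R}
    (hT : T * M * T = 1) : det (M + G) = det M * det (1 + T * G * T) := by
  have hdet : det T * det M * det T = 1 := by simpa [det_mul] using congrArg det hT
  rw [← hT, ← add_mul, ← mul_add, det_mul, det_mul]
  linear_combination -(det (M + G)) * hdet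

lemma IsHermitian.det_one_add {A : Matrix n n ℝ} (hA : A.IsHermitian) :
    det (1 + A) = ∏ i, (1 + hA.eigenvalues i) := by
  have h_cfc : 1 + A = cfc (fun x : ℝ => 1 + x) A := by
    rw [cfc_add .., cfc_const_one .., cfc_id' ..]
  rw [h_cfc, hA.cfc_eq]
  simp [IsHermitian.cfc, -Unitary.conjStarAlgAut_apply]

lemma IsHermitian.eigenvalues_le {A : Matrix n n ℝ} (hA : A.IsHermitian) {r : ℝ}
    (h : A ≤ algebraMap ℝ _ r) (i : n) : hA.eigenvalues i ≤ r :=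
  (le_algebraMap_iff_spectrum_le hA.isSelfAdjoint).mp h _ (hA.eigenvalues_mem_spectrum_real i)

theorem trace_le_two_mul_log_det_one_add {A : Matrix n n ℝ} (h0 : 0 ≤ A) (h2 : A ≤ 2) :
    trace A ≤ 2 * Real.log (det (1 + A)) := by
  have hA : A.PosSemidef := h0.posSemidef
  have hle : ∀ i, hA.1.eigenvalues i ≤ 2 := hA.1.eigenvalues_le (by rwa [map_ofNat])
  rw [hA.1.trace_eq_sum_eigenvalues, hA.1.det_one_add,
    Real.log_prod fun i _ => by linarith [hA.eigenvalues_nonneg i], Finset.mul_sum]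
  exact Finset.sum_le_sum fun i _ => Real.le_two_mul_log_one_add (hA.eigenvalues_nonneg i) (hle i)

theorem trace_mul_inv_le_two_mul_log_det_add {M G : Matrix n n ℝ} (hM : M.PosDef) (hG : 0 ≤ G)
    (hGM : G ≤ 2 • M) : trace (G * M⁻¹) ≤ 2 * (Real.log (det (M + G)) - Real.log (det M)) := by
  obtain ⟨T, hT0, hTMT, hTT⟩ := hM.exists_nonneg_mul_mul_eq_one
  have hN0 : 0 ≤ T * G * T := conjugate_nonneg_of_nonneg hG hT0
  have hN2 : T * G * T ≤ 2 := by
    have := conjugate_le_conjugate_of_nonneg hGM hT0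
    rwa [mul_smul_comm, smul_mul_assoc, hTMT, two_smul, one_add_one_eq_two] at this
  have htrace : trace (G * M⁻¹) = trace (T * G * T) := by
    rw [← hTT, ← mul_assoc, trace_mul_cycle]
  rw [htrace, det_add_eq_det_mul_det_one_add hTMT,
    Real.log_mul hM.det_pos.ne' (PosDef.one.add_posSemidef hN0.posSemidef).det_pos.ne',
    add_sub_cancel_left]
  exact trace_le_two_mul_log_det_one_add hN0 hN2

end Matrix

theorem stmt_0_general (d : ℕ) (M G : Matrix (Fin d) (Fin d) ℝ)
    (hM : (M - 1).PosSemidef) (hG : G.PosSemidef) (hG1 : ((1 : Matrix (Fin d) (Fin d) ℝ) - G).PosSemidef) :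
    Matrix.trace (G * M⁻¹) ≤ 2 * (Real.log (M + G).det - Real.log M.det) := by
  have hMpd : M.PosDef := by simpa using PosDef.posSemidef_add hM PosDef.one
  refine trace_mul_inv_le_two_mul_log_det_add hMpd hG.nonneg ?_
  calc G ≤ 1 := hG1
    _ ≤ M := hM
    _ ≤ 2 • M := by rw [two_smul]; exact le_add_of_nonneg_left hMpd.posSemidef.nonneg

/-- Single-step log-determinant potential inequality: if `M ⪰ I` and `0 ⪯ G ⪯ I`, then
`trace (G * M⁻¹) ≤ 2 * (log det (M + G) - log det M)`. -/
theorem stmt_0 (d : ℕ) (hd : 0 < d) (M G : Matrix (Fin d) (Fin d) ℝ)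
    (hM : (M - 1).PosSemidef) (hG : G.PosSemidef) (hG1 : ((1 : Matrix (Fin d) (Fin d) ℝ) - G).PosSemidef) :
    Matrix.trace (G * M⁻¹) ≤ 2 * (Real.log (M + G).det - Real.log M.det) :=
  stmt_0_general d M G hM hG hG1
end

section
/- Let S be a finite nonempty set, H a positive integer, μ a probability distribution on S, and for each h ∈ {1,…,H−1} let P_h, Q_h : S × S → ℝ be row-stochastic (P_h(s,s') ≥ 0 and Σ_{s'} P_h(s,s') = 1 for every s, and likewise for Q_h). Let r_h : S → [0,1] for h ∈ {1,…,H}. Define occupancies d_1 = μ and d_{h+1}(s') = Σ_s d_h(s)·P_h(s,s'), and value functions V^P_H(s) = r_H(s), V^P_h(s) = r_h(s) + Σ_{s'} P_h(s,s')·V^P_{h+1}(s'), with V^Q defined analogously using Q. If ε ≥ 0 satisfies Σ_s d_h(s)·Σ_{s'} |P_h(s,s') − Q_h(s,s')| ≤ ε for every h ∈ {1,…,H−1}, then |Σ_s μ(s)·(V^P_1(s) − V^Q_1(s))| ≤ H²·ε/2. -/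
/-- Finite-state Markov-chain form of Lemma 2: if the one-step L1 prediction error along the
`P`-trajectory is at most `ε` at each step, the value functions of `P` and `Q` differ by at most
`H² ε / 2` at the initial distribution. -/
theorem stmt_6 (S : Type) [Fintype S] [Nonempty S] (H : ℕ) (hH : 0 < H)
    (μ : S → ℝ) (hμ0 : ∀ s, 0 ≤ μ s) (hμ1 : ∑ s, μ s = 1)
    (P Q : ℕ → S → S → ℝ)
    (hP0 : ∀ h ∈ Finset.Icc 1 (H - 1), ∀ s s', 0 ≤ P h s s')
    (hP1 : ∀ h ∈ Finset.Icc 1 (H - 1), ∀ s, ∑ s', P h s s' = 1)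
    (hQ0 : ∀ h ∈ Finset.Icc 1 (H - 1), ∀ s s', 0 ≤ Q h s s')
    (hQ1 : ∀ h ∈ Finset.Icc 1 (H - 1), ∀ s, ∑ s', Q h s s' = 1)
    (r : ℕ → S → ℝ)
    (hr : ∀ h ∈ Finset.Icc 1 H, ∀ s, 0 ≤ r h s ∧ r h s ≤ 1)
    (d : ℕ → S → ℝ)
    (hd1 : ∀ s, d 1 s = μ s)
    (hdrec : ∀ h ∈ Finset.Icc 1 (H - 1), ∀ s', d (h + 1) s' = ∑ s, d h s * P h s s')
    (VP VQ : ℕ → S → ℝ)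
    (hVPH : ∀ s, VP H s = r H s)
    (hVP : ∀ h ∈ Finset.Icc 1 (H - 1), ∀ s, VP h s = r h s + ∑ s', P h s s' * VP (h + 1) s')
    (hVQH : ∀ s, VQ H s = r H s)
    (hVQ : ∀ h ∈ Finset.Icc 1 (H - 1), ∀ s, VQ h s = r h s + ∑ s', Q h s s' * VQ (h + 1) s')
    (ε : ℝ) (hε : 0 ≤ ε)
    (herr : ∀ h ∈ Finset.Icc 1 (H - 1), ∑ s, d h s * ∑ s', |P h s s' - Q h s s'| ≤ ε) :
    |∑ s, μ s * (VP 1 s - VQ 1 s)| ≤ (H : ℝ) ^ 2 * ε / 2 := by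
  -- membership helper
  have hmem : ∀ h : ℕ, 1 ≤ h → h + 1 ≤ H → h ∈ Finset.Icc 1 (H - 1) := by
    intro h h1 h2
    simp only [Finset.mem_Icc]
    exact ⟨h1, Nat.le_sub_one_of_lt h2⟩
  -- d nonneg
  have hd0 : ∀ h : ℕ, 1 ≤ h → h ≤ H → ∀ s, 0 ≤ d h s := by
    intro h
    induction h with
    | zero => intro h1; omega
    | succ k ih =>
      intro h1 h2 s
      rcases Nat.eq_or_lt_of_le h1 with h1' | h1'
      · rw [← h1', hd1]; exact hμ0 s
      · have hk1 : 1 ≤ k := by omega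
        have hkm : k ∈ Finset.Icc 1 (H - 1) := hmem k hk1 h2
        rw [hdrec k hkm s]
        exact Finset.sum_nonneg fun x _ =>
          mul_nonneg (ih hk1 (by omega) x) (hP0 k hkm x s)
  -- VQ bounds
  have hVQb : ∀ m h : ℕ, h + m = H → 1 ≤ h → ∀ s, 0 ≤ VQ h s ∧ VQ h s ≤ (m : ℝ) + 1 := by
    intro m
    induction m with
    | zero =>
      intro h hhm h1 s
      have hh : h = H := by omega
      rw [hh, hVQH]
      have := hr H (by simp [Finset.mem_Icc]; omega) s
      constructor
      · exact this.1
      · simpa using this.2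
    | succ k ih =>
      intro h hhm h1 s
      have hm : h ∈ Finset.Icc 1 (H - 1) := hmem h h1 (by omega)
      have hrm := hr h (by simp [Finset.mem_Icc]; omega) s
      have ih' := ih (h + 1) (by omega) (by omega)
      rw [hVQ h hm s]
      constructor
      · have : (0:ℝ) ≤ ∑ s', Q h s s' * VQ (h + 1) s' :=
          Finset.sum_nonneg fun x _ => mul_nonneg (hQ0 h hm s x) (ih' x).1
        linarith [hrm.1]
      · have : ∑ s', Q h s s' * VQ (h + 1) s' ≤ (k : ℝ) + 1 := by
          calc ∑ s', Q h s s' * VQ (h + 1) s'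
              ≤ ∑ s', Q h s s' * ((k : ℝ) + 1) :=
                Finset.sum_le_sum fun x _ =>
                  mul_le_mul_of_nonneg_left (ih' x).2 (hQ0 h hm s x)
            _ = ((k : ℝ) + 1) := by
                rw [← Finset.sum_mul, hQ1 h hm s, one_mul]
        push_cast
        linarith [hrm.2]
  -- main claim
  have main : ∀ m h : ℕ, h + m = H → 1 ≤ h →
      |∑ s, d h s * (VP h s - VQ h s)| ≤ (m : ℝ) * (m + 1) / 2 * ε := by
    intro m
    induction m with
    | zero =>
      intro h hhm h1
      have : h = H := by omega
      subst this
      simp only [hVPH, hVQH, sub_self, mul_zero, Finset.sum_const_zero, abs_zero,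
        Nat.cast_zero, zero_mul, zero_div]
      positivity
    | succ k ih =>
      intro h hhm h1
      have hm : h ∈ Finset.Icc 1 (H - 1) := hmem h h1 (by omega)
      -- decomposition
      have key : ∑ s, d h s * (VP h s - VQ h s)
          = (∑ s, ∑ s', d h s * (P h s s' - Q h s s') * VQ (h + 1) s')
            + ∑ s', d (h + 1) s' * (VP (h + 1) s' - VQ (h + 1) s') := by
        have h2 : ∑ s', d (h + 1) s' * (VP (h + 1) s' - VQ (h + 1) s')
            = ∑ s, ∑ s', d h s * P h s s' * (VP (h + 1) s' - VQ (h + 1) s') := by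
          rw [Finset.sum_comm]
          refine Finset.sum_congr rfl fun s' _ => ?_
          rw [hdrec h hm s', Finset.sum_mul]
        rw [h2, ← Finset.sum_add_distrib]
        refine Finset.sum_congr rfl fun s _ => ?_
        rw [hVP h hm s, hVQ h hm s, ← Finset.sum_add_distrib]
        have : (r h s + ∑ s', P h s s' * VP (h + 1) s') -
            (r h s + ∑ s', Q h s s' * VQ (h + 1) s')
            = ∑ s', (P h s s' * VP (h + 1) s' - Q h s s' * VQ (h + 1) s') := by
          rw [Finset.sum_sub_distrib]; ring
        rw [this, Finset.mul_sum]
        exact Finset.sum_congr rfl fun x _ => by ring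
      rw [key]
      have bd1 : |∑ s, ∑ s', d h s * (P h s s' - Q h s s') * VQ (h + 1) s'|
          ≤ ((k : ℝ) + 1) * ε := by
        calc |∑ s, ∑ s', d h s * (P h s s' - Q h s s') * VQ (h + 1) s'|
            ≤ ∑ s, ∑ s', |d h s * (P h s s' - Q h s s') * VQ (h + 1) s'| := by
              refine (Finset.abs_sum_le_sum_abs _ _).trans ?_
              exact Finset.sum_le_sum fun s _ => Finset.abs_sum_le_sum_abs _ _
          _ ≤ ∑ s, ∑ s', d h s * |P h s s' - Q h s s'| * ((k : ℝ) + 1) := by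
              refine Finset.sum_le_sum fun s _ => Finset.sum_le_sum fun s' _ => ?_
              rw [abs_mul, abs_mul, abs_of_nonneg (hd0 h h1 (by omega) s)]
              refine mul_le_mul_of_nonneg_left ?_
                (mul_nonneg (hd0 h h1 (by omega) s) (abs_nonneg _))
              have hb := hVQb k (h + 1) (by omega) (by omega) s'
              rw [abs_of_nonneg hb.1]
              exact hb.2
          _ = ((k : ℝ) + 1) * ∑ s, d h s * ∑ s', |P h s s' - Q h s s'| := by
              rw [Finset.mul_sum]
              refine Finset.sum_congr rfl fun s _ => ?_
              simp only [Finset.mul_sum]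
              exact Finset.sum_congr rfl fun x _ => by ring
          _ ≤ ((k : ℝ) + 1) * ε := by
              refine mul_le_mul_of_nonneg_left (herr h hm) (by positivity)
      have bd2 := ih (h + 1) (by omega) (by omega)
      calc |(∑ s, ∑ s', d h s * (P h s s' - Q h s s') * VQ (h + 1) s')
            + ∑ s', d (h + 1) s' * (VP (h + 1) s' - VQ (h + 1) s')|
          ≤ |∑ s, ∑ s', d h s * (P h s s' - Q h s s') * VQ (h + 1) s'|
            + |∑ s', d (h + 1) s' * (VP (h + 1) s' - VQ (h + 1) s')| := abs_add_le _ _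
        _ ≤ ((k : ℝ) + 1) * ε + (k : ℝ) * (k + 1) / 2 * ε := add_le_add bd1 bd2
        _ = ((k : ℝ) + 1) * ((k : ℝ) + 1 + 1) / 2 * ε := by ring
        _ = ((k + 1 : ℕ) : ℝ) * ((k + 1 : ℕ) + 1) / 2 * ε := by push_cast; ring
  have h1 := main (H - 1) 1 (by omega) le_rfl
  have heq : ∑ s, μ s * (VP 1 s - VQ 1 s) = ∑ s, d 1 s * (VP 1 s - VQ 1 s) := by
    exact Finset.sum_congr rfl fun s _ => by rw [hd1]
  rw [heq]
  refine h1.trans ?_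
  have hcast : ((H - 1 : ℕ) : ℝ) = (H : ℝ) - 1 := by
    have : (1:ℕ) ≤ H := hH
    push_cast [this]; ring
  rw [hcast]
  have hHr : (1:ℝ) ≤ (H:ℝ) := by exact_mod_cast hH
  nlinarith [sq_nonneg ((H:ℝ))]
end

section
/- There exists an absolute constant C > 0 such that the following holds. Let X and Y be finite nonempty sets, ρ a probability distribution on X, and F a finite set of functions from X to probability distributions on Y, containing a distinguished element f*. Let k be a positive integer and let (x₁,y₁), …, (x_k,y_k) be independent random pairs with xᵢ distributed according to ρ and, conditionally on xᵢ, yᵢ distributed according to f*(xᵢ). Then for every δ ∈ (0,1), with probability at least 1 − δ, every f̂ ∈ F maximizing the likelihood ∏_{i=1}^k f(xᵢ)(yᵢ) over f ∈ F satisfies Σ_{x∈X} ρ(x)·(Σ_{y∈Y} |f̂(x)(y) − f*(x)(y)|)² ≤ C·log(|F|/δ)/k. -/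
open scoped Classical

private lemma sqrt_prod_aux {ι : Type*} (s : Finset ι) (g : ι → ℝ) (hg : ∀ i ∈ s, 0 ≤ g i) :
    Real.sqrt (∏ i ∈ s, g i) = ∏ i ∈ s, Real.sqrt (g i) := by
  induction s using Finset.cons_induction with
  | empty => simp
  | cons a s ha ih =>
    rw [Finset.prod_cons, Finset.prod_cons,
      Real.sqrt_mul (hg a (Finset.mem_cons_self a s)),
      ih (fun i hi => hg i (Finset.mem_cons_of_mem hi))]

/-- Pointwise Hellinger-type bound: if `u, v` are nonnegative with sums `1`, then
`∑ √(u v) ≤ 1 - (∑ |u - v|)^2 / 8`. -/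
private lemma hellinger_aux {Y : Type} [Fintype Y] (u v : Y → ℝ)
    (hu0 : ∀ y, 0 ≤ u y) (hu1 : ∑ y, u y = 1)
    (hv0 : ∀ y, 0 ≤ v y) (hv1 : ∑ y, v y = 1) :
    ∑ y, Real.sqrt (u y * v y) ≤ 1 - (∑ y, |u y - v y|) ^ 2 / 8 := by
  set a : Y → ℝ := fun y => Real.sqrt (u y)
  set b : Y → ℝ := fun y => Real.sqrt (v y)
  have ha2 : ∀ y, a y ^ 2 = u y := fun y => Real.sq_sqrt (hu0 y)
  have hb2 : ∀ y, b y ^ 2 = v y := fun y => Real.sq_sqrt (hv0 y)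
  have habs : ∀ y, |u y - v y| = |a y - b y| * (a y + b y) := by
    intro y
    have h : u y - v y = (a y - b y) * (a y + b y) := by
      rw [← ha2 y, ← hb2 y]; ring
    have hab : 0 ≤ a y + b y := add_nonneg (Real.sqrt_nonneg _) (Real.sqrt_nonneg _)
    rw [h, abs_mul, abs_of_nonneg hab]
  have hsqrtmul : ∀ y, Real.sqrt (u y * v y) = a y * b y := fun y => Real.sqrt_mul (hu0 y) _
  -- Cauchy-Schwarz
  have hcs : (∑ y, |u y - v y|) ^ 2
      ≤ (∑ y, (a y - b y) ^ 2) * ∑ y, (a y + b y) ^ 2 := by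
    calc (∑ y, |u y - v y|) ^ 2
        = (∑ y, |a y - b y| * (a y + b y)) ^ 2 := by simp_rw [habs]
      _ ≤ (∑ y, |a y - b y| ^ 2) * ∑ y, (a y + b y) ^ 2 :=
          Finset.sum_mul_sq_le_sq_mul_sq _ _ _
      _ = (∑ y, (a y - b y) ^ 2) * ∑ y, (a y + b y) ^ 2 := by simp_rw [sq_abs]
  have hsum_add : ∑ y, (a y + b y) ^ 2 ≤ 4 := by
    have : ∑ y, (a y + b y) ^ 2 ≤ ∑ y, (2 * a y ^ 2 + 2 * b y ^ 2) := by
      apply Finset.sum_le_sum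
      intro y _
      nlinarith [sq_nonneg (a y - b y)]
    calc ∑ y, (a y + b y) ^ 2 ≤ ∑ y, (2 * a y ^ 2 + 2 * b y ^ 2) := this
      _ = 2 * (∑ y, u y) + 2 * (∑ y, v y) := by
          rw [Finset.sum_add_distrib, ← Finset.mul_sum, ← Finset.mul_sum]
          simp_rw [ha2, hb2]
      _ = 4 := by rw [hu1, hv1]; norm_num
  have hsum_sub : ∑ y, (a y - b y) ^ 2 = 2 - 2 * ∑ y, Real.sqrt (u y * v y) := by
    have : ∀ y, (a y - b y) ^ 2 = u y + v y - 2 * Real.sqrt (u y * v y) := by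
      intro y
      rw [hsqrtmul y, ← ha2 y, ← hb2 y]; ring
    simp_rw [this]
    rw [Finset.sum_sub_distrib, Finset.sum_add_distrib, hu1, hv1, ← Finset.mul_sum]
    ring
  have hnn : 0 ≤ ∑ y, (a y - b y) ^ 2 := Finset.sum_nonneg fun y _ => sq_nonneg _
  nlinarith [hcs, hsum_add, hsum_sub, hnn, sq_nonneg (∑ y, |u y - v y|)]

private lemma ite_nonneg_aux {P : Prop} [Decidable P] {x : ℝ} (hx : 0 ≤ x) :
    0 ≤ if P then x else 0 := by
  split
  · exact hx
  · exact le_rfl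

/-- MLE guarantee (Lemma 3 / C.1): with `k` i.i.d. pairs `(xᵢ,yᵢ)` drawn with `xᵢ ∼ ρ` and
`yᵢ ∼ f*(xᵢ)`, with probability at least `1 - δ` every likelihood maximizer `f̂ ∈ F` satisfies
`E_{x∼ρ}[‖f̂(x) - f*(x)‖₁²] ≤ C log(|F|/δ)/k`.  Probability is expressed by bounding by `δ`
the total product-measure weight of the failure event. -/
theorem stmt_8 :
    ∃ C : ℝ, 0 < C ∧
      ∀ (X Y : Type) (_ : Fintype X) (_ : Fintype Y) (_ : Nonempty X) (_ : Nonempty Y)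
        (ρ : X → ℝ), (∀ x, 0 ≤ ρ x) → (∑ x, ρ x = 1) →
        ∀ (F : Finset (X → Y → ℝ)),
          (∀ f ∈ F, ∀ x, (∀ y, 0 ≤ f x y) ∧ ∑ y, f x y = 1) →
          ∀ fstar ∈ F, ∀ k : ℕ, 0 < k → ∀ δ : ℝ, 0 < δ → δ < 1 →
            ∑ ω ∈ Finset.univ.filter (fun ω : Fin k → X × Y =>
                ∃ fhat ∈ F,
                  (∀ f ∈ F, ∏ i, f (ω i).1 (ω i).2 ≤ ∏ i, fhat (ω i).1 (ω i).2) ∧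
                  ¬ (∑ x, ρ x * (∑ y, |fhat x y - fstar x y|) ^ 2
                      ≤ C * Real.log ((F.card : ℝ) / δ) / (k : ℝ))),
              (∏ i, ρ (ω i).1 * fstar (ω i).1 (ω i).2) ≤ δ := by
  refine ⟨8, by norm_num, ?_⟩
  intro X Y _ _ _ _ ρ hρ0 hρ1 F hF fstar hfstar k hk δ hδ0 hδ1
  have hFcard : 0 < (F.card : ℝ) := by
    exact_mod_cast Finset.card_pos.mpr ⟨fstar, hfstar⟩
  -- distance and affinity
  set d : (X → Y → ℝ) → ℝ := fun f => ∑ x, ρ x * (∑ y, |f x y - fstar x y|) ^ 2 with hd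
  set a : (X → Y → ℝ) → ℝ :=
    fun f => ∑ x, ρ x * ∑ y, Real.sqrt (f x y * fstar x y) with ha
  set thr : ℝ := 8 * Real.log ((F.card : ℝ) / δ) / (k : ℝ) with hthr
  set w : (Fin k → X × Y) → ℝ :=
    fun ω => ∏ i, ρ (ω i).1 * fstar (ω i).1 (ω i).2 with hw
  have hw0 : ∀ ω, 0 ≤ w ω := fun ω =>
    Finset.prod_nonneg fun i _ => mul_nonneg (hρ0 _) ((hF fstar hfstar _).1 _)
  -- affinity bound
  have haff : ∀ f ∈ F, a f ≤ 1 - d f / 8 := by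
    intro f hf
    have hx : ∀ x, ρ x * ∑ y, Real.sqrt (f x y * fstar x y)
        ≤ ρ x * (1 - (∑ y, |f x y - fstar x y|) ^ 2 / 8) := by
      intro x
      exact mul_le_mul_of_nonneg_left
        (hellinger_aux (f x) (fstar x) (hF f hf x).1 (hF f hf x).2
          (hF fstar hfstar x).1 (hF fstar hfstar x).2) (hρ0 x)
    calc a f ≤ ∑ x, ρ x * (1 - (∑ y, |f x y - fstar x y|) ^ 2 / 8) :=
          Finset.sum_le_sum fun x _ => hx x
      _ = (∑ x, ρ x) - (∑ x, ρ x * (∑ y, |f x y - fstar x y|) ^ 2) / 8 := by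
          simp_rw [mul_sub, mul_one, Finset.sum_sub_distrib, Finset.sum_div,
            mul_div_assoc]
      _ = 1 - d f / 8 := by rw [hρ1, hd]
  have haff0 : ∀ f ∈ F, 0 ≤ a f := by
    intro f hf
    exact Finset.sum_nonneg fun x _ => mul_nonneg (hρ0 x)
      (Finset.sum_nonneg fun y _ => Real.sqrt_nonneg _)
  -- tail bound for one f : probability that f beats fstar is ≤ (a f)^k
  have tail : ∀ f ∈ F,
      ∑ ω ∈ Finset.univ.filter (fun ω : Fin k → X × Y =>
          ∏ i, fstar (ω i).1 (ω i).2 ≤ ∏ i, f (ω i).1 (ω i).2), w ω ≤ (a f) ^ k := by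
    intro f hf
    -- on the event, bound w by the sqrt-product weight
    have hstep : ∀ ω ∈ Finset.univ.filter (fun ω : Fin k → X × Y =>
        ∏ i, fstar (ω i).1 (ω i).2 ≤ ∏ i, f (ω i).1 (ω i).2),
        w ω ≤ ∏ i, ρ (ω i).1 * Real.sqrt (f (ω i).1 (ω i).2 * fstar (ω i).1 (ω i).2) := by
      intro ω hω
      rw [Finset.mem_filter] at hω
      have hE := hω.2
      have hP0 : 0 ≤ ∏ i, fstar (ω i).1 (ω i).2 :=
        Finset.prod_nonneg fun i _ => (hF fstar hfstar _).1 _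
      have key : ∏ i, fstar (ω i).1 (ω i).2
          ≤ ∏ i, Real.sqrt (f (ω i).1 (ω i).2 * fstar (ω i).1 (ω i).2) := by
        rw [← sqrt_prod_aux _ _ (fun i _ =>
          mul_nonneg ((hF f hf _).1 _) ((hF fstar hfstar _).1 _)),
          Finset.prod_mul_distrib]
        calc ∏ i, fstar (ω i).1 (ω i).2
            = Real.sqrt ((∏ i, fstar (ω i).1 (ω i).2) * ∏ i, fstar (ω i).1 (ω i).2) := by
              rw [← sq]; exact (Real.sqrt_sq hP0).symm
          _ ≤ Real.sqrt ((∏ i, f (ω i).1 (ω i).2) * ∏ i, fstar (ω i).1 (ω i).2) :=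
              Real.sqrt_le_sqrt (mul_le_mul_of_nonneg_right hE hP0)
      calc w ω = (∏ i, ρ (ω i).1) * ∏ i, fstar (ω i).1 (ω i).2 :=
            Finset.prod_mul_distrib
        _ ≤ (∏ i, ρ (ω i).1) * ∏ i, Real.sqrt (f (ω i).1 (ω i).2 * fstar (ω i).1 (ω i).2) :=
            mul_le_mul_of_nonneg_left key (Finset.prod_nonneg fun i _ => hρ0 _)
        _ = ∏ i, ρ (ω i).1 * Real.sqrt (f (ω i).1 (ω i).2 * fstar (ω i).1 (ω i).2) := by
            rw [Finset.prod_mul_distrib]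
    calc ∑ ω ∈ Finset.univ.filter (fun ω : Fin k → X × Y =>
          ∏ i, fstar (ω i).1 (ω i).2 ≤ ∏ i, f (ω i).1 (ω i).2), w ω
        ≤ ∑ ω ∈ Finset.univ.filter (fun ω : Fin k → X × Y =>
            ∏ i, fstar (ω i).1 (ω i).2 ≤ ∏ i, f (ω i).1 (ω i).2),
            ∏ i, ρ (ω i).1 * Real.sqrt (f (ω i).1 (ω i).2 * fstar (ω i).1 (ω i).2) :=
          Finset.sum_le_sum hstep
      _ ≤ ∑ ω : Fin k → X × Y,
            ∏ i, ρ (ω i).1 * Real.sqrt (f (ω i).1 (ω i).2 * fstar (ω i).1 (ω i).2) :=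
          Finset.sum_le_sum_of_subset_of_nonneg (Finset.filter_subset _ _)
            (fun ω _ _ => Finset.prod_nonneg fun i _ =>
              mul_nonneg (hρ0 _) (Real.sqrt_nonneg _))
      _ = (a f) ^ k := by
          rw [ha]
          have := Finset.prod_univ_sum (fun _ : Fin k => (Finset.univ : Finset (X × Y)))
            (fun _ (p : X × Y) => ρ p.1 * Real.sqrt (f p.1 p.2 * fstar p.1 p.2))
          rw [Fintype.piFinset_univ] at this
          rw [← this, Finset.prod_const, Finset.card_univ, Fintype.card_fin]
          congr 1
          rw [Fintype.sum_prod_type]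
          exact Finset.sum_congr rfl fun x _ => by rw [Finset.mul_sum]
  -- numeric step: bad f gives tail ≤ δ / |F|
  have hnum : ∀ f ∈ F, ¬ d f ≤ thr → (a f) ^ k ≤ δ / (F.card : ℝ) := by
    intro f hf hbad
    have hdk : Real.log ((F.card : ℝ) / δ) ≤ (k : ℝ) * (d f / 8) := by
      push_neg at hbad
      have hk' : (0 : ℝ) < (k : ℝ) := by exact_mod_cast hk
      rw [hthr] at hbad
      rw [div_lt_iff₀ hk'] at hbad
      nlinarith
    have h1 : a f ≤ Real.exp (-(d f / 8)) := by
      calc a f ≤ 1 - d f / 8 := haff f hf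
        _ ≤ Real.exp (-(d f / 8)) := by
            have := Real.add_one_le_exp (-(d f / 8)); linarith
    have h2 : (a f) ^ k ≤ Real.exp (-(d f / 8)) ^ k :=
      pow_le_pow_left₀ (haff0 f hf) h1 k
    have h3 : Real.exp (-(d f / 8)) ^ k = Real.exp ((k : ℝ) * (-(d f / 8))) :=
      (Real.exp_nat_mul _ k).symm
    have h4 : Real.exp ((k : ℝ) * (-(d f / 8))) ≤ Real.exp (-(Real.log ((F.card : ℝ) / δ))) := by
      apply Real.exp_le_exp.mpr
      nlinarith
    have h5 : Real.exp (-(Real.log ((F.card : ℝ) / δ))) = δ / (F.card : ℝ) := by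
      rw [← Real.log_inv, Real.exp_log]
      · rw [inv_div]
      · positivity
    calc (a f) ^ k ≤ Real.exp (-(d f / 8)) ^ k := h2
      _ = Real.exp ((k : ℝ) * (-(d f / 8))) := h3
      _ ≤ Real.exp (-(Real.log ((F.card : ℝ) / δ))) := h4
      _ = δ / (F.card : ℝ) := h5
  -- union bound
  set Fbad : Finset (X → Y → ℝ) := F.filter (fun f => ¬ d f ≤ thr) with hFbad
  have hmain : ∀ ω ∈ Finset.univ.filter (fun ω : Fin k → X × Y =>
      ∃ fhat ∈ F,
        (∀ f ∈ F, ∏ i, f (ω i).1 (ω i).2 ≤ ∏ i, fhat (ω i).1 (ω i).2) ∧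
        ¬ (∑ x, ρ x * (∑ y, |fhat x y - fstar x y|) ^ 2
            ≤ 8 * Real.log ((F.card : ℝ) / δ) / (k : ℝ))),
      w ω ≤ ∑ f ∈ Fbad,
        (if ∏ i, fstar (ω i).1 (ω i).2 ≤ ∏ i, f (ω i).1 (ω i).2 then w ω else 0) := by
    intro ω hω
    rw [Finset.mem_filter] at hω
    obtain ⟨fhat, hfhatF, hmax, hdist⟩ := hω.2
    have hfhatBad : fhat ∈ Fbad := by
      rw [hFbad, Finset.mem_filter]
      exact ⟨hfhatF, by rw [hd, hthr]; exact hdist⟩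
    have hωE : ∏ i, fstar (ω i).1 (ω i).2 ≤ ∏ i, fhat (ω i).1 (ω i).2 :=
      hmax fstar hfstar
    have : w ω = (if ∏ i, fstar (ω i).1 (ω i).2 ≤ ∏ i, fhat (ω i).1 (ω i).2
        then w ω else 0) := by rw [if_pos hωE]
    refine this.trans_le (Finset.single_le_sum (f := fun f =>
      (if ∏ i, fstar (ω i).1 (ω i).2 ≤ ∏ i, f (ω i).1 (ω i).2 then w ω else 0))
      (fun f _ => ite_nonneg_aux (hw0 ω)) hfhatBad)
  calc ∑ ω ∈ Finset.univ.filter (fun ω : Fin k → X × Y =>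
        ∃ fhat ∈ F,
          (∀ f ∈ F, ∏ i, f (ω i).1 (ω i).2 ≤ ∏ i, fhat (ω i).1 (ω i).2) ∧
          ¬ (∑ x, ρ x * (∑ y, |fhat x y - fstar x y|) ^ 2
              ≤ 8 * Real.log ((F.card : ℝ) / δ) / (k : ℝ))), w ω
      ≤ ∑ ω ∈ Finset.univ.filter (fun ω : Fin k → X × Y =>
          ∃ fhat ∈ F,
            (∀ f ∈ F, ∏ i, f (ω i).1 (ω i).2 ≤ ∏ i, fhat (ω i).1 (ω i).2) ∧
            ¬ (∑ x, ρ x * (∑ y, |fhat x y - fstar x y|) ^ 2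
                ≤ 8 * Real.log ((F.card : ℝ) / δ) / (k : ℝ))),
          ∑ f ∈ Fbad,
            (if ∏ i, fstar (ω i).1 (ω i).2 ≤ ∏ i, f (ω i).1 (ω i).2 then w ω else 0) :=
        Finset.sum_le_sum hmain
    _ ≤ ∑ ω : Fin k → X × Y, ∑ f ∈ Fbad,
          (if ∏ i, fstar (ω i).1 (ω i).2 ≤ ∏ i, f (ω i).1 (ω i).2 then w ω else 0) :=
        Finset.sum_le_sum_of_subset_of_nonneg (Finset.filter_subset _ _)
          (fun ω _ _ => Finset.sum_nonneg fun f _ => ite_nonneg_aux (hw0 ω))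
    _ = ∑ f ∈ Fbad, ∑ ω ∈ Finset.univ.filter (fun ω : Fin k → X × Y =>
          ∏ i, fstar (ω i).1 (ω i).2 ≤ ∏ i, f (ω i).1 (ω i).2), w ω := by
        rw [Finset.sum_comm]
        exact Finset.sum_congr rfl fun f _ => (Finset.sum_filter _ _).symm
    _ ≤ ∑ f ∈ Fbad, δ / (F.card : ℝ) := by
        apply Finset.sum_le_sum
        intro f hfb
        rw [hFbad, Finset.mem_filter] at hfb
        exact le_trans (tail f hfb.1) (hnum f hfb.1 hfb.2)
    _ = (Fbad.card : ℝ) * (δ / (F.card : ℝ)) := by rw [Finset.sum_const, nsmul_eq_mul]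
    _ ≤ (F.card : ℝ) * (δ / (F.card : ℝ)) := by
        apply mul_le_mul_of_nonneg_right _ (by positivity)
        exact_mod_cast Finset.card_filter_le _ _
    _ = δ := by field_simp
end

section
/- Let d be a positive integer and let X ⊆ ℝ^d be a compact set whose linear span is all of ℝ^d. Then there exists a probability measure ρ on X supported on a finite set of at most d(d+1)/2 points such that the d×d matrix V = E_{x∼ρ}[x·xᵀ] is invertible and, for every x' ∈ X, x'ᵀ·V⁻¹·x' ≤ d. -/
/-!
Maximise `det` over the compact convex set `K` of second-moment matrices of finitely supported
distributions on `X`, i.e. the convex hull of `{x xᵀ | x ∈ X}`; since `X` spans, `K` contains a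
positive definite matrix, so the maximiser `V` is invertible. For `y ∈ X` and `s ≥ 0`,
`(1 + s)⁻¹ (V + s y yᵀ) ∈ K` has determinant `det V (1 + s yᵀV⁻¹y) / (1 + s)^d`, and maximality at
`s = 0` forces `yᵀV⁻¹y ≤ d`. By Carathéodory, `V` is a positive combination of affinely independent
matrices `xᵢxᵢᵀ`; the weighted average of the numbers `tr (V⁻¹ xᵢxᵢᵀ) ≤ d` is `tr (V⁻¹ V) = d`, so
all of them equal `d`. Lying on an affine hyperplane that misses `0`, the `xᵢxᵢᵀ` are then linearly
independent in the `d(d+1)/2`-dimensional space of symmetric matrices.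
-/

open Matrix Set Module Submodule

theorem IsCompact.convexHull_of_finiteDimensional {E : Type*} [AddCommGroup E] [Module ℝ E]
    [TopologicalSpace E] [IsTopologicalAddGroup E] [ContinuousSMul ℝ E] [FiniteDimensional ℝ E]
    {s : Set E} (hs : IsCompact s) : IsCompact (convexHull ℝ s) := by
  -- Carathéodory: every point of the hull is a convex combination of at most `finrank + 1` points
  have hrepr : convexHull ℝ s = ⋃ k ∈ Finset.range (finrank ℝ E + 2),
      (fun q : (Fin k → ℝ) × (Fin k → E) => ∑ i, q.1 i • q.2 i) ''
        (stdSimplex ℝ (Fin k) ×ˢ univ.pi fun _ => s) := by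
    refine Subset.antisymm (fun x hx => ?_) ?_
    · obtain ⟨ι, _, z, w, hzs, hz, hw0, hw1, rfl⟩ := eq_pos_convex_span_of_mem_convexHull hx
      have hcard : Fintype.card ι < finrank ℝ E + 2 :=
        Nat.lt_succ_of_le (hz.card_le_finrank_succ.trans (by gcongr; exact Submodule.finrank_le _))
      let e := Fintype.equivFin ι
      refine mem_biUnion (Finset.mem_range.2 hcard) ⟨(w ∘ e.symm, z ∘ e.symm),
        ⟨⟨fun i => (hw0 _).le, (e.symm.sum_comp w).trans hw1⟩, fun i _ => hzs (mem_range_self _)⟩,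
        e.symm.sum_comp fun i => w i • z i⟩
    · simp only [iUnion_subset_iff]
      rintro k - _ ⟨⟨w, z⟩, ⟨⟨hw0, hw1⟩, hz⟩, rfl⟩
      exact (convex_convexHull ℝ s).sum_mem (fun i _ => hw0 i) hw1
        fun i _ => subset_convexHull ℝ s (hz i (mem_univ i))
  rw [hrepr]
  exact (Finset.range _).isCompact_biUnion fun k _ =>
    ((isCompact_stdSimplex ℝ (Fin k)).prod (isCompact_univ_pi fun _ => hs)).image (by fun_prop)

theorem le_of_forall_one_add_mul_le_one_add_pow {n : ℕ} {g : ℝ}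
    (h : ∀ s : ℝ, 0 ≤ s → 1 + s * g ≤ (1 + s) ^ n) : g ≤ n := by
  have hmax : IsLocalMaxOn (fun s : ℝ => 1 + s * g - (1 + s) ^ n) (Ici 0) 0 :=
    Filter.eventually_of_mem self_mem_nhdsWithin fun s hs => by simpa using h s hs
  have hderiv : HasDerivAt (fun s : ℝ => 1 + s * g - (1 + s) ^ n) (g - n) 0 :=
    ((((hasDerivAt_id' (0 : ℝ)).mul_const g).const_add 1).fun_sub
      (((hasDerivAt_id' (0 : ℝ)).const_add 1).fun_pow n)).congr_deriv (by simp)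
  have := hmax.hasFDerivWithinAt_nonpos hderiv.hasDerivWithinAt.hasFDerivWithinAt (y := 1)
    (mem_posTangentConeAt_of_segment_subset (by simp [segment_eq_Icc, Icc_subset_Ici_self]))
  simpa [sub_nonpos] using this

theorem AffineIndependent.linearIndependent_of_forall_apply_eq {ι K V : Type*} [Field K]
    [AddCommGroup V] [Module K V] {p : ι → V} (hp : AffineIndependent K p) (f : V →ₗ[K] K)
    {c : K} (hc : c ≠ 0) (hf : ∀ i, f (p i) = c) : LinearIndependent K p := by
  refine linearIndependent_iff'.2 fun s w hw => hp.eq_zero_of_sum_eq_zero ?_ hw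
  have := congrArg f hw
  simp only [map_sum, map_smul, hf, smul_eq_mul, map_zero, ← Finset.sum_mul] at this
  exact (mul_eq_zero.1 this).resolve_right hc

namespace Matrix

variable {n : Type*} [Fintype n]

theorem det_add_vecMulVec [DecidableEq n] {R : Type*} [CommRing R] {A : Matrix n n R}
    (hA : IsUnit A.det) (u v : n → R) :
    (A + vecMulVec u v).det = A.det * (1 + v ⬝ᵥ A⁻¹ *ᵥ u) := by
  rw [vecMulVec_eq Unit, det_add_replicateCol_mul_replicateRow hA, Matrix.mul_assoc,
    ← replicateCol_mulVec, det_unique (1 + _ : Matrix Unit Unit R)]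
  simp

theorem finrank_span_le_of_forall_isSymm {K : Type*} [Field K] {s : Set (Matrix n n K)}
    (hs : ∀ A ∈ s, A.IsSymm) :
    finrank K (span K s) ≤ Fintype.card n * (Fintype.card n + 1) / 2 := by
  have hsymm : ∀ A ∈ span K s, A.IsSymm := fun A hA => by
    induction hA using span_induction with
    | mem A hA => exact hs A hA
    | zero => exact isSymm_zero
    | add A B _ _ hA hB => exact hA.add hB
    | smul c A _ hA => exact hA.smul c
  -- a symmetric matrix is determined by its entries at one representative of each unordered pair
  let entries : Matrix n n K →ₗ[K] Sym2 n → K :=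
    { toFun := fun A z => A z.out.1 z.out.2
      map_add' := fun _ _ => rfl
      map_smul' := fun _ _ => rfl }
  have hinj : Function.Injective (entries.domRestrict (span K s)) := by
    refine (injective_iff_map_eq_zero _).2 fun A hA => Subtype.ext <| Matrix.ext fun i j => ?_
    obtain ⟨⟨a, b⟩, hab, hA0⟩ : ∃ q : n × n, s(q.1, q.2) = s(i, j) ∧ A.1 q.1 q.2 = 0 :=
      ⟨_, Quot.out_eq _, congrFun hA s(i, j)⟩
    rcases Sym2.eq_iff.1 hab with ⟨rfl, rfl⟩ | ⟨rfl, rfl⟩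
    · exact hA0
    · rw [← (hsymm A A.2).apply] at hA0
      exact hA0
  calc finrank K (span K s) ≤ finrank K (Sym2 n → K) :=
        LinearMap.finrank_le_finrank_of_injective hinj
    _ = _ := by
      rw [finrank_fintype_fun_eq_card, Sym2.card, Nat.choose_two_right, Nat.add_sub_cancel,
        mul_comm]

theorem posDef_sum_smul_vecMulVec_self {s : Finset (n → ℝ)}
    (hs : span ℝ (s : Set (n → ℝ)) = ⊤) {w : (n → ℝ) → ℝ} (hw : ∀ x ∈ s, 0 < w x) :
    (∑ x ∈ s, w x • vecMulVec x x).PosDef := by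
  refine .of_dotProduct_mulVec_pos ?_ fun v hv => ?_
  · simp [IsHermitian, transpose_sum, transpose_vecMulVec]
  have hquad : star v ⬝ᵥ (∑ x ∈ s, w x • vecMulVec x x) *ᵥ v = ∑ x ∈ s, w x * (x ⬝ᵥ v) ^ 2 := by
    simp [Matrix.sum_mulVec, smul_mulVec, vecMulVec_mulVec, sum_dotProduct, smul_dotProduct,
      dotProduct_comm v, sq]
  obtain ⟨x, hxs, hxv⟩ : ∃ x ∈ s, x ⬝ᵥ v ≠ 0 := by
    by_contra! h
    have hperp : ∀ y ∈ span ℝ (s : Set (n → ℝ)), y ⬝ᵥ v = 0 := fun y hy => by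
      induction hy using span_induction with
      | mem y hy => exact h y hy
      | zero => exact zero_dotProduct v
      | add y z _ _ hy hz => rw [add_dotProduct, hy, hz, add_zero]
      | smul c y _ hy => rw [smul_dotProduct, hy, smul_zero]
    exact hv (dotProduct_self_eq_zero.1 (hperp v (hs ▸ mem_top)))
  rw [hquad]
  exact Finset.sum_pos' (fun y hy => by have := hw y hy; positivity)
    ⟨x, hxs, by have := hw x hxs; positivity⟩

theorem exists_posDef_mem_convexHull_vecMulVec_self [Nonempty n] {X : Set (n → ℝ)}
    (hX : span ℝ X = ⊤) : ∃ W ∈ convexHull ℝ ((fun x => vecMulVec x x) '' X), W.PosDef := by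
  obtain ⟨b, hbX, hbspan, hb⟩ := exists_linearIndependent ℝ X
  set s := hb.setFinite.toFinset
  have hs : span ℝ (s : Set (n → ℝ)) = ⊤ := by rw [Set.Finite.coe_toFinset, hbspan, hX]
  have hne : s.Nonempty := by
    rw [Finset.nonempty_iff_ne_empty]
    rintro h
    rw [h, Finset.coe_empty, span_empty] at hs
    exact bot_ne_top hs
  refine ⟨∑ x ∈ s, (s.card : ℝ)⁻¹ • vecMulVec x x,
    (convex_convexHull ℝ _).sum_mem (fun _ _ => by positivity) ?_ fun x hx =>
      subset_convexHull ℝ _ (mem_image_of_mem _ (hbX (Set.Finite.mem_toFinset _ |>.1 hx))),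
    posDef_sum_smul_vecMulVec_self hs fun _ _ => by positivity⟩
  simp [hne.card_pos.ne']

end Matrix

section Design

variable {n : Type*} [Fintype n] [DecidableEq n] {X : Set (n → ℝ)} {V : Matrix n n ℝ}

theorem dotProduct_inv_mulVec_le_card_of_isMaxOn
    (hV : V ∈ convexHull ℝ ((fun x => vecMulVec x x) '' X))
    (hmax : IsMaxOn det (convexHull ℝ ((fun x => vecMulVec x x) '' X)) V) (hdet : 0 < V.det)
    {y : n → ℝ} (hy : y ∈ X) : y ⬝ᵥ V⁻¹ *ᵥ y ≤ Fintype.card n := by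
  refine le_of_forall_one_add_mul_le_one_add_pow fun s hs => ?_
  have hmem : (1 + s)⁻¹ • (V + s • vecMulVec y y) ∈
      convexHull ℝ ((fun x => vecMulVec x x) '' X) := by
    convert (convex_convexHull ℝ _) hV (subset_convexHull ℝ _ (mem_image_of_mem _ hy))
      (by positivity : 0 ≤ (1 + s)⁻¹) (by positivity : 0 ≤ s * (1 + s)⁻¹)
      (by field_simp) using 1
    rw [smul_add, smul_smul, mul_comm]
  have hle : ((1 + s)⁻¹ • (V + s • vecMulVec y y)).det ≤ V.det := hmax hmem
  rw [det_smul, ← smul_vecMulVec, det_add_vecMulVec hdet.ne'.isUnit, mulVec_smul,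
    dotProduct_smul, smul_eq_mul, inv_pow, inv_mul_le_iff₀ (by positivity), mul_comm _ V.det]
    at hle
  exact le_of_mul_le_mul_left hle hdet

theorem exists_design_of_mem_convexHull [Nonempty n]
    (hV : V ∈ convexHull ℝ ((fun x => vecMulVec x x) '' X))
    (hdet : V.det ≠ 0) (hX : ∀ y ∈ X, y ⬝ᵥ V⁻¹ *ᵥ y ≤ Fintype.card n) :
    ∃ (T : Finset (n → ℝ)) (w : (n → ℝ) → ℝ), ↑T ⊆ X ∧
      T.card ≤ Fintype.card n * (Fintype.card n + 1) / 2 ∧ (∀ x ∈ T, 0 ≤ w x) ∧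
      ∑ x ∈ T, w x = 1 ∧ ∑ x ∈ T, w x • vecMulVec x x = V := by
  obtain ⟨ι, _, z, c, hzX, hz, hc0, hc1, hcV⟩ := eq_pos_convex_span_of_mem_convexHull hV
  choose ξ hξX hξ using fun i => hzX (mem_range_self i)
  let ψ : Matrix n n ℝ →ₗ[ℝ] ℝ := traceLinearMap n ℝ ℝ ∘ₗ LinearMap.mulLeft ℝ V⁻¹
  have hψ : ∀ i, ψ (z i) = ξ i ⬝ᵥ V⁻¹ *ᵥ ξ i := fun i => by
    simp [ψ, ← hξ i, mul_vecMulVec, trace_vecMulVec, dotProduct_comm]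
  have hsupp : ∀ i, ψ (z i) = Fintype.card n := by
    have hle : ∀ i ∈ Finset.univ, c i * ψ (z i) ≤ c i * Fintype.card n := fun i _ =>
      mul_le_mul_of_nonneg_left (hψ i ▸ hX _ (hξX i)) (hc0 i).le
    have hsum : ∑ i, c i * ψ (z i) = ∑ i, c i * Fintype.card n := by
      have hψV : ψ V = Fintype.card n := by
        simpa [ψ] using congrArg trace (nonsing_inv_mul _ hdet.isUnit)
      rw [← Finset.sum_mul, hc1, one_mul, ← hψV, ← hcV, map_sum]
      simp only [map_smul, smul_eq_mul]
    exact fun i => mul_left_cancel₀ (hc0 i).ne'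
      ((Finset.sum_eq_sum_iff_of_le hle).1 hsum i (Finset.mem_univ i))
  have hcard : Fintype.card ι ≤ Fintype.card n * (Fintype.card n + 1) / 2 := by
    rw [← finrank_span_eq_card (hz.linearIndependent_of_forall_apply_eq ψ
      (Nat.cast_ne_zero.2 Fintype.card_ne_zero) hsupp)]
    refine finrank_span_le_of_forall_isSymm ?_
    rintro _ ⟨i, rfl⟩
    rw [← hξ i]
    exact transpose_vecMulVec _ _
  have hξinj : Function.Injective ξ := fun i j h => hz.injective (by rw [← hξ i, ← hξ j, h])
  refine ⟨Finset.univ.map ⟨ξ, hξinj⟩, Function.extend ξ c 0, ?_, ?_, ?_, ?_, ?_⟩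
  · simpa [Set.range_subset_iff] using hξX
  · simpa using hcard
  · simp [hξinj.extend_apply, fun i => (hc0 i).le]
  · simpa [hξinj.extend_apply] using hc1
  · simpa [hξinj.extend_apply, hξ] using hcV

end Design

/-- G-optimal design (Kiefer–Wolfowitz, Lemma D.2): for a compact spanning `X ⊆ ℝ^d` there is a
probability distribution supported on at most `d(d+1)/2` points of `X` whose second-moment
matrix `V` is invertible and satisfies `x'ᵀ V⁻¹ x' ≤ d` for all `x' ∈ X`. -/
theorem stmt_10 (d : ℕ) (hd : 0 < d) (X : Set (Fin d → ℝ))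
    (hX : IsCompact X) (hspan : Submodule.span ℝ X = ⊤) :
    ∃ (T : Finset (Fin d → ℝ)) (w : (Fin d → ℝ) → ℝ),
      ↑T ⊆ X ∧ T.card ≤ d * (d + 1) / 2 ∧ (∀ x ∈ T, 0 ≤ w x) ∧ (∑ x ∈ T, w x) = 1 ∧
      (∑ x ∈ T, w x • Matrix.vecMulVec x x).det ≠ 0 ∧
      ∀ x' ∈ X, x' ⬝ᵥ ((∑ x ∈ T, w x • Matrix.vecMulVec x x)⁻¹ *ᵥ x') ≤ (d : ℝ) := by
  have : Nonempty (Fin d) := ⟨⟨0, hd⟩⟩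
  set K := convexHull ℝ ((fun x : Fin d → ℝ => vecMulVec x x) '' X)
  have hK : IsCompact K := (hX.image (by fun_prop)).convexHull_of_finiteDimensional
  obtain ⟨W, hWK, hW⟩ := exists_posDef_mem_convexHull_vecMulVec_self hspan
  obtain ⟨V, hVK, hVmax⟩ := hK.exists_isMaxOn ⟨W, hWK⟩ continuous_id.matrix_det.continuousOn
  have hVdet : 0 < V.det := hW.det_pos.trans_le (hVmax hWK)
  have hopt := fun y hy => dotProduct_inv_mulVec_le_card_of_isMaxOn hVK hVmax hVdet (y := y) hy
  obtain ⟨T, w, hTX, hT, hw0, hw1, rfl⟩ := exists_design_of_mem_convexHull hVK hVdet.ne' hopt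
  exact ⟨T, w, hTX, by simpa using hT, hw0, hw1, hVdet.ne', by simpa using hopt⟩
end

section
/- Let Z and S be finite nonempty sets, d a positive integer, and B > 0, λ > 0, k > 0 real numbers. Let φ : Z → ℝ^d and ω : S → ℝ^d be functions, let g : S → ℝ satisfy |g(s)| ≤ B for all s ∈ S, and set w = Σ_{s∈S} ω(s)·g(s) ∈ ℝ^d; assume ‖w‖₂² ≤ B²·d. Let ν and β be probability distributions on Z and define the positive definite matrix Σ_β = k·E_{z∼β}[φ(z)·φ(z)ᵀ] + λ·I. Then E_{z∼ν}[φ(z)ᵀ·w] ≤ E_{z∼ν}[√(φ(z)ᵀ·Σ_β⁻¹·φ(z))] · √(k·E_{z∼β}[(φ(z)ᵀ·w)²] + B²·λ·d). -/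
/-! For `Σ = k E_β[φ φᵀ] + λ I`, Cauchy–Schwarz in the geometry of `Σ` gives
`φᵀ w ≤ ‖φ‖_{Σ⁻¹} ‖w‖_Σ` pointwise, and `‖w‖_Σ² = k E_β[(φᵀ w)²] + λ ‖w‖₂² ≤ k E_β[(φᵀ w)²] + λ B² d`.
Averaging the pointwise bound over `ν` gives the inequality. -/

open Matrix

namespace Matrix

variable {n : Type*} [Fintype n]

theorem PosSemidef.dotProduct_mulVec_sq_le {R : Type*} [CommRing R] [LinearOrder R]
    [IsStrictOrderedRing R] [StarRing R] [TrivialStar R] {M : Matrix n n R}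
    (hM : M.PosSemidef) (x y : n → R) :
    (x ⬝ᵥ (M *ᵥ y)) ^ 2 ≤ (x ⬝ᵥ (M *ᵥ x)) * (y ⬝ᵥ (M *ᵥ y)) := by
  classical
  have hsymm : (toLinearMap₂' R M).IsSymm := by
    refine ⟨fun u v => ?_⟩
    simp only [toLinearMap₂'_apply', RingHom.id_apply]
    rw [dotProduct_mulVec, dotProduct_comm, ← mulVec_transpose,
      ← conjTranspose_eq_transpose_of_trivial, hM.isHermitian.eq]
  simpa only [toLinearMap₂'_apply'] using
    LinearMap.BilinForm.apply_sq_le_of_symm (toLinearMap₂' R M)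
      (fun u => by simpa [toLinearMap₂'_apply'] using hM.dotProduct_mulVec_nonneg u) hsymm x y

theorem PosDef.dotProduct_le_sqrt_mul_sqrt [DecidableEq n] {M : Matrix n n ℝ} (hM : M.PosDef)
    (x y : n → ℝ) :
    x ⬝ᵥ y ≤ √(x ⬝ᵥ (M⁻¹ *ᵥ x)) * √(y ⬝ᵥ (M *ᵥ y)) := by
  have hMinv : M⁻¹.PosDef := hM.inv
  have hMy : M⁻¹ *ᵥ (M *ᵥ y) = y := by
    rw [mulVec_mulVec, nonsing_inv_mul _ (isUnit_iff_ne_zero.mpr hM.det_pos.ne'), one_mulVec]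
  -- Cauchy–Schwarz in the `M⁻¹`-inner product, applied to `x` and `M y`.
  have hcs := hMinv.posSemidef.dotProduct_mulVec_sq_le x (M *ᵥ y)
  rw [hMy, dotProduct_comm (M *ᵥ y) y] at hcs
  have hx : 0 ≤ x ⬝ᵥ (M⁻¹ *ᵥ x) := by
    simpa using hMinv.posSemidef.dotProduct_mulVec_nonneg x
  rw [← Real.sqrt_mul hx]
  exact (le_abs_self _).trans (Real.abs_le_sqrt hcs)

end Matrix

noncomputable def regularizedCovariance {Z n : Type*} [Fintype Z] [DecidableEq n]
    (k lam : ℝ) (β : Z → ℝ) (φ : Z → n → ℝ) : Matrix n n ℝ :=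
  k • ∑ z, β z • vecMulVec (φ z) (φ z) + lam • 1

section

variable {Z n : Type*} [Fintype Z] [Fintype n] [DecidableEq n]

theorem posDef_regularizedCovariance {k lam : ℝ} {β : Z → ℝ} (φ : Z → n → ℝ)
    (hk : 0 ≤ k) (hlam : 0 < lam) (hβ : ∀ z, 0 ≤ β z) :
    (regularizedCovariance k lam β φ).PosDef := by
  have hcov : (∑ z, β z • vecMulVec (φ z) (φ z)).PosSemidef :=
    posSemidef_sum _ fun z _ => by
      simpa using (posSemidef_vecMulVec_self_star (φ z)).smul (hβ z)
  exact PosDef.posSemidef_add (hcov.smul hk) (PosDef.one.smul hlam)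

theorem dotProduct_regularizedCovariance_mulVec (k lam : ℝ) (β : Z → ℝ) (φ : Z → n → ℝ)
    (w : n → ℝ) :
    w ⬝ᵥ (regularizedCovariance k lam β φ *ᵥ w)
      = k * ∑ z, β z * (φ z ⬝ᵥ w) ^ 2 + lam * (w ⬝ᵥ w) := by
  simp only [regularizedCovariance, add_mulVec, smul_mulVec, sum_mulVec, vecMulVec_mulVec,
    op_smul_eq_smul, one_mulVec, dotProduct_add, dotProduct_smul, dotProduct_sum, smul_eq_mul,
    Finset.mul_sum]
  simp only [dotProduct_comm w, sq]

end

theorem stmt_12_general (Z S : Type) [Fintype Z] [Fintype S]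
    (d : ℕ) (B lam k : ℝ) (hlam : 0 < lam) (hk : 0 < k)
    (φ : Z → Fin d → ℝ) (ω : S → Fin d → ℝ) (g : S → ℝ)
    (hw : ∑ i, ((∑ s, g s • ω s) i) ^ 2 ≤ B ^ 2 * d)
    (ν β : Z → ℝ)
    (hν0 : ∀ z, 0 ≤ ν z)
    (hβ0 : ∀ z, 0 ≤ β z) :
    ∑ z, ν z * (φ z ⬝ᵥ (∑ s, g s • ω s))
      ≤ (∑ z, ν z * Real.sqrt (φ z ⬝ᵥ
            ((k • (∑ z', β z' • Matrix.vecMulVec (φ z') (φ z'))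
              + lam • (1 : Matrix (Fin d) (Fin d) ℝ))⁻¹ *ᵥ φ z)))
        * Real.sqrt (k * (∑ z, β z * (φ z ⬝ᵥ (∑ s, g s • ω s)) ^ 2) + B ^ 2 * lam * d) := by
  set w := ∑ s, g s • ω s
  set Sβ := regularizedCovariance k lam β φ
  change _ ≤ (∑ z, ν z * √(φ z ⬝ᵥ (Sβ⁻¹ *ᵥ φ z))) * _
  have hquad : w ⬝ᵥ (Sβ *ᵥ w) ≤ k * ∑ z, β z * (φ z ⬝ᵥ w) ^ 2 + B ^ 2 * lam * d := by
    have hww : w ⬝ᵥ w ≤ B ^ 2 * d := by simpa only [dotProduct, sq] using hw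
    rw [dotProduct_regularizedCovariance_mulVec]
    linarith [mul_le_mul_of_nonneg_left hww hlam.le]
  have hpoint (x : Z) :
      φ x ⬝ᵥ w ≤ √(φ x ⬝ᵥ (Sβ⁻¹ *ᵥ φ x)) * √(k * ∑ z, β z * (φ z ⬝ᵥ w) ^ 2 + B ^ 2 * lam * d) :=
    ((posDef_regularizedCovariance φ hk.le hlam hβ0).dotProduct_le_sqrt_mul_sqrt _ _).trans
      (by gcongr)
  rw [Finset.sum_mul]
  exact Finset.sum_le_sum fun z _ => by
    rw [mul_assoc]
    exact mul_le_mul_of_nonneg_left (hpoint z) (hν0 z)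

/-- Core of the L-step back inequality (Lemmas 5, B.4, B.5): for `w = Σ_s g(s) ω(s)` with
`|g| ≤ B` and `‖w‖₂² ≤ B² d`, the expectation of `φ(z)ᵀ w` under the roll-in distribution `ν`
is bounded by the expected `Σ_β⁻¹`-norm of features times
`√(k E_{z∼β}[(φ(z)ᵀ w)²] + B² λ d)`. -/
theorem stmt_12 (Z S : Type) [Fintype Z] [Nonempty Z] [Fintype S] [Nonempty S]
    (d : ℕ) (hd : 0 < d) (B lam k : ℝ) (hB : 0 < B) (hlam : 0 < lam) (hk : 0 < k)
    (φ : Z → Fin d → ℝ) (ω : S → Fin d → ℝ) (g : S → ℝ)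
    (hg : ∀ s, |g s| ≤ B)
    (hw : ∑ i, ((∑ s, g s • ω s) i) ^ 2 ≤ B ^ 2 * d)
    (ν β : Z → ℝ)
    (hν0 : ∀ z, 0 ≤ ν z) (hν1 : ∑ z, ν z = 1)
    (hβ0 : ∀ z, 0 ≤ β z) (hβ1 : ∑ z, β z = 1) :
    ∑ z, ν z * (φ z ⬝ᵥ (∑ s, g s • ω s))
      ≤ (∑ z, ν z * Real.sqrt (φ z ⬝ᵥ
            ((k • (∑ z', β z' • Matrix.vecMulVec (φ z') (φ z'))
              + lam • (1 : Matrix (Fin d) (Fin d) ℝ))⁻¹ *ᵥ φ z)))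
        * Real.sqrt (k * (∑ z, β z * (φ z ⬝ᵥ (∑ s, g s • ω s)) ^ 2) + B ^ 2 * lam * d) :=
  stmt_12_general Z S d B lam k hlam hk φ ω g hw ν β hν0 hβ0
end
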